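/- Let F be submodular on subsets of a finite set V with F(∅)=0. Then min_{X⊆V} F(X) = max_{x∈B(F)} ∑_{ℓ∈V} min{x_ℓ, 0}. -/

import Mathlib

open Finset

/-- Greedy algorithm: the base polyhedron is nonempty. -/
lemma exists_base_aux {V : Type*} [Fintype V] [DecidableEq V] (F : Finset V → ℝ)
    (hsub : ∀ A B : Finset V, F A + F B ≥ F (A ∪ B) + F (A ∩ B))
    (h0 : F ∅ = 0) :
    ∃ x : V → ℝ, (∀ S : Finset V, ∑ ℓ ∈ S, x ℓ ≤ F S) ∧ ∑ ℓ, x ℓ = F Finset.univ := by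
  classical
  set n := Fintype.card V with hn
  set e : Fin n ≃ V := (Fintype.equivFin V).symm with he
  set idx : V → ℕ := fun v => (e.symm v : ℕ) with hidx
  have idx_inj : Function.Injective idx := by
    intro a b h
    have : e.symm a = e.symm b := Fin.ext h
    exact e.symm.injective this
  set pref : ℕ → Finset V := fun k => univ.filter (fun w => idx w < k) with hpref
  set x : V → ℝ := fun v => F (pref (idx v + 1)) - F (pref (idx v)) with hx
  have pref_zero : pref 0 = ∅ := by
    ext w; simp [hpref]
  have pref_top : pref n = univ := by
    ext w; simp only [hpref, mem_filter, mem_univ, true_and, iff_true]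
    exact (e.symm w).isLt
  have mem_pref : ∀ v k, v ∈ pref k ↔ idx v < k := by
    intro v k; simp [hpref]
  have pref_succ : ∀ v : V, pref (idx v + 1) = insert v (pref (idx v)) := by
    intro v
    ext w
    simp only [mem_pref, mem_insert, Nat.lt_succ_iff]
    constructor
    · intro h
      rcases lt_or_eq_of_le h with h | h
      · exact Or.inr h
      · exact Or.inl (idx_inj h)
    · rintro (rfl | h)
      · exact le_refl _
      · exact le_of_lt h
  have key : ∀ S : Finset V, ∑ ℓ ∈ S, x ℓ ≤ F S := by
    intro S
    induction S using Finset.strongInduction with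
    | _ S ih =>
      rcases S.eq_empty_or_nonempty with rfl | hS
      · simp [h0]
      · obtain ⟨v, hv, hmax⟩ := S.exists_max_image idx hS
        have hsub1 : S.erase v ⊆ pref (idx v) := by
          intro w hw
          rw [mem_pref]
          rcases lt_or_eq_of_le (hmax w (mem_of_mem_erase hw)) with h | h
          · exact h
          · exact absurd (idx_inj h) (ne_of_mem_erase hw)
        have hvnp : v ∉ pref (idx v) := by rw [mem_pref]; omega
        have hU : pref (idx v) ∪ S = insert v (pref (idx v)) := by
          apply Finset.Subset.antisymm
          · intro w hw
            rcases mem_union.1 hw with h | h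
            · exact mem_insert_of_mem h
            · by_cases hwv : w = v
              · exact hwv ▸ mem_insert_self _ _
              · exact mem_insert_of_mem (hsub1 (mem_erase.2 ⟨hwv, h⟩))
          · intro w hw
            rcases mem_insert.1 hw with rfl | h
            · exact mem_union_right _ hv
            · exact mem_union_left _ h
        have hI : pref (idx v) ∩ S = S.erase v := by
          apply Finset.Subset.antisymm
          · intro w hw
            rcases mem_inter.1 hw with ⟨h1, h2⟩
            refine mem_erase.2 ⟨?_, h2⟩
            rintro rfl; exact hvnp h1
          · intro w hw
            exact mem_inter.2 ⟨hsub1 hw, mem_of_mem_erase hw⟩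
        have hsm := hsub (pref (idx v)) S
        rw [hU, hI] at hsm
        have hih := ih (S.erase v) (Finset.erase_ssubset hv)
        have hsumsplit : ∑ ℓ ∈ S, x ℓ = x v + ∑ ℓ ∈ S.erase v, x ℓ :=
          (Finset.add_sum_erase S x hv).symm
        have hxv : x v = F (insert v (pref (idx v))) - F (pref (idx v)) := by
          simp only [hx]; rw [pref_succ v]
        rw [hsumsplit, hxv]
        linarith
  refine ⟨x, key, ?_⟩
  have h1 : ∑ ℓ, x ℓ = ∑ i : Fin n, x (e i) := (Equiv.sum_comp e x).symm
  have h2 : ∀ i : Fin n, x (e i) = F (pref (i + 1)) - F (pref i) := by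
    intro i
    have : idx (e i) = (i : ℕ) := by simp [hidx]
    rw [hx]; simp only [this]
  rw [h1, Finset.sum_congr rfl (fun i _ => h2 i), Fin.sum_univ_eq_sum_range
    (fun k => F (pref (k + 1)) - F (pref k)) n, Finset.sum_range_sub (fun k => F (pref k)) n,
    pref_zero, pref_top, h0, sub_zero]


theorem submodular_min_eq_base_polyhedron_max
    {V : Type*} [Fintype V] [DecidableEq V] (F : Finset V → ℝ)
    (hsub : ∀ A B : Finset V, F A + F B ≥ F (A ∪ B) + F (A ∩ B))
    (h0 : F ∅ = 0) :
    ∃ m : ℝ,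
      IsLeast {r : ℝ | ∃ X : Finset V, r = F X} m ∧
      IsGreatest {r : ℝ | ∃ x : V → ℝ,
        ((∀ S : Finset V, ∑ ℓ ∈ S, x ℓ ≤ F S) ∧ ∑ ℓ, x ℓ = F Finset.univ) ∧
        r = ∑ ℓ, min (x ℓ) 0} m := by
  classical
  obtain ⟨x0, hx0⟩ := exists_base_aux F hsub h0
  set P : Set (V → ℝ) :=
    {x | (∀ S : Finset V, ∑ ℓ ∈ S, x ℓ ≤ F S) ∧ ∑ ℓ, x ℓ = F Finset.univ} with hP
  -- weak duality
  have hweak : ∀ x' : V → ℝ, (∀ S : Finset V, ∑ ℓ ∈ S, x' ℓ ≤ F S) →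
      ∀ X : Finset V, ∑ v, min (x' v) 0 ≤ F X := by
    intro x' hfe X
    have h1 : ∑ v, min (x' v) 0 ≤ ∑ v ∈ X, min (x' v) 0 := by
      have := Finset.sum_le_sum_of_subset_of_nonneg (f := fun v => -min (x' v) 0)
        (X.subset_univ) (fun v _ _ => by simp [neg_nonneg, min_le_right])
      simp only [Finset.sum_neg_distrib] at this
      linarith
    have h2 : ∑ v ∈ X, min (x' v) 0 ≤ ∑ v ∈ X, x' v :=
      Finset.sum_le_sum fun v _ => min_le_left _ _
    exact le_trans h1 (le_trans h2 (hfe X))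
  -- compactness of P
  have hsumc : ∀ S : Finset V, Continuous (fun x : V → ℝ => ∑ ℓ ∈ S, x ℓ) :=
    fun S => continuous_finset_sum S fun ℓ _ => continuous_apply ℓ
  have hclosed : IsClosed P := by
    have h1 : IsClosed {x : V → ℝ | ∀ S : Finset V, ∑ ℓ ∈ S, x ℓ ≤ F S} := by
      have heq : {x : V → ℝ | ∀ S : Finset V, ∑ ℓ ∈ S, x ℓ ≤ F S} =
          ⋂ S : Finset V, {x | ∑ ℓ ∈ S, x ℓ ≤ F S} := by ext; simp
      rw [heq]
      exact isClosed_iInter fun S => isClosed_le (hsumc S) continuous_const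
    have h2 : IsClosed {x : V → ℝ | ∑ ℓ, x ℓ = F Finset.univ} :=
      isClosed_eq (hsumc univ) continuous_const
    exact h1.inter h2
  have hcpt : IsCompact P := by
    refine (isCompact_univ_pi (fun v =>
      isCompact_Icc (a := F univ - F (univ.erase v)) (b := F {v}))).of_isClosed_subset
      hclosed ?_
    rintro x ⟨hle, heq⟩ v -
    constructor
    · have h1 := hle (univ.erase v)
      have h2 : ∑ ℓ ∈ univ.erase v, x ℓ + x v = F univ := by
        rw [Finset.sum_erase_add _ _ (mem_univ v)]; exact heq
      linarith
    · have := hle {v}; simpa using this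
  -- maximizer of g on P
  have hgc : Continuous (fun x : V → ℝ => ∑ ℓ, min (x ℓ) 0) :=
    continuous_finset_sum _ fun ℓ _ => (continuous_apply ℓ).min continuous_const
  obtain ⟨x, hxP, hmax⟩ := hcpt.exists_isMaxOn ⟨x0, hx0⟩ hgc.continuousOn
  obtain ⟨hfeas, htot⟩ := hxP
  -- lattice of tight sets
  have hlat : ∀ S T : Finset V, ∑ v ∈ S, x v = F S → ∑ v ∈ T, x v = F T →
      ∑ v ∈ S ∪ T, x v = F (S ∪ T) ∧ ∑ v ∈ S ∩ T, x v = F (S ∩ T) := by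
    intro S T hS hT
    have h1 := hfeas (S ∪ T)
    have h2 := hfeas (S ∩ T)
    have h3 : ∑ v ∈ S ∪ T, x v + ∑ v ∈ S ∩ T, x v = ∑ v ∈ S, x v + ∑ v ∈ T, x v :=
      Finset.sum_union_inter
    have h4 := hsub S T
    constructor <;> linarith
  -- exchange argument
  have hexch : ∀ ℓ j : V, x ℓ < 0 → 0 < x j →
      ∃ S : Finset V, ℓ ∈ S ∧ j ∉ S ∧ ∑ v ∈ S, x v = F S := by
    intro ℓ j hℓ hj
    by_contra hcon
    push_neg at hcon
    have hlt : ∀ S : Finset V, ℓ ∈ S → j ∉ S → ∑ v ∈ S, x v < F S :=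
      fun S h1 h2 => lt_of_le_of_ne (hfeas S) (hcon S h1 h2)
    have hne : ℓ ≠ j := fun h => absurd (h ▸ hℓ) (not_lt.2 (le_of_lt hj))
    have hsing : ({ℓ} : Finset V) ∈ Finset.univ.filter (fun S : Finset V => ℓ ∈ S ∧ j ∉ S) := by
      simp [hne.symm, Ne.symm hne]
    obtain ⟨S0, hS0mem, hS0min⟩ := Finset.exists_min_image
      (Finset.univ.filter (fun S : Finset V => ℓ ∈ S ∧ j ∉ S))
      (fun S => F S - ∑ v ∈ S, x v) ⟨_, hsing⟩
    rw [mem_filter] at hS0mem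
    set ε : ℝ := min (F S0 - ∑ v ∈ S0, x v) (min (-x ℓ) (x j)) with hε
    have hεpos : 0 < ε := by
      apply lt_min
      · linarith [hlt S0 hS0mem.2.1 hS0mem.2.2]
      · exact lt_min (by linarith) hj
    set y : V → ℝ := fun v => x v + (if v = ℓ then ε else 0) - (if v = j then ε else 0)
      with hy
    have hysum : ∀ S : Finset V, ∑ v ∈ S, y v =
        ∑ v ∈ S, x v + (if ℓ ∈ S then ε else 0) - (if j ∈ S then ε else 0) := by
      intro S
      simp only [hy, Finset.sum_sub_distrib, Finset.sum_add_distrib,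
        Finset.sum_ite_eq' S ℓ (fun _ => ε), Finset.sum_ite_eq' S j (fun _ => ε)]
    have hyfeas : ∀ S : Finset V, ∑ v ∈ S, y v ≤ F S := by
      intro S
      rw [hysum]
      by_cases h1 : ℓ ∈ S <;> by_cases h2 : j ∈ S <;>
        simp only [h1, h2, if_true, if_false] <;>
        [skip; skip; skip; skip]
      · linarith [hfeas S]
      · have := hS0min S (by rw [mem_filter]; exact ⟨mem_univ _, h1, h2⟩)
        have hεle : ε ≤ F S - ∑ v ∈ S, x v := le_trans (min_le_left _ _) this
        linarith
      · linarith [hfeas S, hεpos]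
      · linarith [hfeas S]
    have hytot : ∑ v, y v = F Finset.univ := by
      rw [hysum]
      simp [htot]
    have hterm : ∀ v, min (y v) 0 = min (x v) 0 + (if v = ℓ then ε else 0) := by
      intro v
      by_cases h1 : v = ℓ
      · subst h1
        have hvj : v ≠ j := hne
        have hyv : y v = x v + ε := by simp [hy, hvj]
        have h1 : x v + ε ≤ 0 := by
          have : ε ≤ -x v := le_trans (min_le_right _ _) (min_le_left _ _)
          linarith
        rw [hyv, if_pos rfl, min_eq_left h1, min_eq_left (by linarith)]
      · rw [if_neg h1]
        by_cases h2 : v = j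
        · subst h2
          have hyv : y v = x v - ε := by simp [hy, fun h => h1 h]
          have hεle : ε ≤ x v := le_trans (min_le_right _ _) (min_le_right _ _)
          rw [hyv, min_eq_right (by linarith), min_eq_right (by linarith), add_zero]
        · have hyv : y v = x v := by simp [hy, h1, h2]
          rw [hyv, add_zero]
    have hgy : ∑ v, min (y v) 0 = (∑ v, min (x v) 0) + ε := by
      rw [Finset.sum_congr rfl fun v _ => hterm v, Finset.sum_add_distrib,
        Finset.sum_ite_eq' univ ℓ (fun _ => ε), if_pos (mem_univ ℓ)]
    have hle := hmax (Set.mem_setOf.2 ⟨hyfeas, hytot⟩)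
    simp only [Set.mem_setOf_eq] at hle
    rw [hgy] at hle
    linarith
  -- tight set containing a negative element, avoiding a finset of positive elements
  have havoid : ∀ (J : Finset V), (∀ j ∈ J, 0 < x j) → ∀ ℓ, x ℓ < 0 →
      ∃ S : Finset V, ℓ ∈ S ∧ (∀ j ∈ J, j ∉ S) ∧ ∑ v ∈ S, x v = F S := by
    intro J
    induction J using Finset.induction_on with
    | empty => exact fun _ ℓ hℓ => ⟨univ, mem_univ ℓ, by simp, htot⟩
    | insert _ _ ha ih =>
      rename_i a J'
      intro hpos ℓ hℓ
      obtain ⟨S1, hS1ℓ, hS1J, hS1t⟩ := ih (fun j hj => hpos j (mem_insert_of_mem hj)) ℓ hℓ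
      obtain ⟨S2, hS2ℓ, hS2j, hS2t⟩ := hexch ℓ a hℓ (hpos a (mem_insert_self a J'))
      refine ⟨S1 ∩ S2, mem_inter.2 ⟨hS1ℓ, hS2ℓ⟩, ?_, (hlat S1 S2 hS1t hS2t).2⟩
      intro j hj hjmem
      rcases mem_insert.1 hj with rfl | hj'
      · exact hS2j (mem_inter.1 hjmem).2
      · exact hS1J j hj' (mem_inter.1 hjmem).1
  -- tight set containing all negative elements, avoiding all positive elements
  have hcover : ∀ (L : Finset V), (∀ ℓ ∈ L, x ℓ < 0) →
      ∃ T : Finset V, L ⊆ T ∧ (∀ j ∈ T, ¬ 0 < x j) ∧ ∑ v ∈ T, x v = F T := by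
    intro L
    induction L using Finset.induction_on with
    | empty => exact fun _ => ⟨∅, Finset.Subset.refl _, by simp, by simp [h0]⟩
    | insert _ _ ha ih =>
      rename_i a L'
      intro hneg
      obtain ⟨T1, hT1L, hT1pos, hT1t⟩ := ih (fun ℓ hℓ => hneg ℓ (mem_insert_of_mem hℓ))
      obtain ⟨S, hSℓ, hSJ, hSt⟩ := havoid (univ.filter (fun j => 0 < x j))
        (fun j hj => (mem_filter.1 hj).2) a (hneg a (mem_insert_self a L'))
      refine ⟨S ∪ T1, ?_, ?_, (hlat S T1 hSt hT1t).1⟩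
      · intro w hw
        rcases mem_insert.1 hw with rfl | hw'
        · exact mem_union_left _ hSℓ
        · exact mem_union_right _ (hT1L hw')
      · intro j hj hjpos
        rcases mem_union.1 hj with h | h
        · exact hSJ j (mem_filter.2 ⟨mem_univ j, hjpos⟩) h
        · exact hT1pos j h hjpos
  obtain ⟨T, hTL, hTpos, hTt⟩ := hcover (univ.filter (fun v => x v < 0))
    (fun v hv => (mem_filter.1 hv).2)
  -- F T equals the objective at x
  have hFT : F T = ∑ v, min (x v) 0 := by
    rw [← hTt]
    have h1 : ∑ v ∈ T, x v = ∑ v ∈ T, min (x v) 0 :=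
      Finset.sum_congr rfl fun v hv => (min_eq_left (not_lt.1 (hTpos v hv))).symm
    rw [h1]
    refine Finset.sum_subset (subset_univ T) ?_
    intro v _ hvT
    have : ¬ x v < 0 := fun h => hvT (hTL (mem_filter.2 ⟨mem_univ v, h⟩))
    simp [min_eq_right (not_lt.1 this)]
  refine ⟨F T, ⟨⟨T, rfl⟩, ?_⟩, ⟨⟨x, ⟨hfeas, htot⟩, hFT⟩, ?_⟩⟩
  · rintro r ⟨X, rfl⟩
    rw [hFT]
    exact hweak x hfeas X
  · rintro r ⟨x', ⟨hfe', _⟩, rfl⟩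
    exact hweak x' hfe' T
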